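/- Assume u ≠ 0 and v ≠ 0. Then (x,y) ∈ ℝ^m × ℝ^n is a spurious local minimum of f (a local minimum that is not a global minimum) if and only if either (|Σ_{i : u_i ≠ 0} sgn(u_i) x_i| < Σ_{i : u_i = 0} |x_i| and y = 0), or (x = 0 and |Σ_{j : v_j ≠ 0} sgn(v_j) y_j| < Σ_{j : v_j = 0} |y_j|). -/

import Mathlib

/-!
Write `f = rankOneL1Loss u v`, `S = signSum u` and `T = offSupportL1 u`. Then
`f (a, b) ≥ ‖u‖₁‖v‖₁ + T a · ‖b‖₁ - S a · Σ_j sgn(v_j) b_j`, with equality as long as no product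
`a_i b_j` with `u_i ≠ 0` exceeds `|u_i v_j|`. Since `f (x, 0) = ‖u‖₁‖v‖₁ > 0`, this makes `(x, 0)` a
local minimum when `|S x| < T x`, while if `T x ≤ |S x|` moving `a` along `± sgn u` and `b` along
`± sgn v` strictly lowers `f`. The case `x = 0` is symmetric.

Off the axes every local minimum is global. As `f (·, y)` is convex and separable, each row
`s ↦ Σ_j |s y_j - u_i v_j|` is minimised at `x_i`, and symmetrically each column. The convex
piecewise-linear `r ↦ Σ_k |r x_k - u_k|` attains its minimum (column optimality), hence at a kink
`ν = u_i / x_i`; with `c = ν⁻¹`, row optimality gives `‖x - c u‖₁ ‖y - ν v‖₁ ≤ f (x, y)`, and along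
the segment towards the zero `(c u, ν v)` of `f` the loss is at most `(1 - t²) f (x, y)`.
-/

open scoped Classical

namespace Real

theorem sign_mul (a b : ℝ) : sign (a * b) = sign a * sign b := by
  rcases lt_trichotomy a 0 with ha | rfl | ha <;> rcases lt_trichotomy b 0 with hb | rfl | hb <;>
    simp [sign_of_neg, sign_of_pos, mul_pos_of_neg_of_neg, mul_neg_of_neg_of_pos,
      mul_neg_of_pos_of_neg, *]

theorem sign_mul_self_eq_abs (a : ℝ) : sign a * a = |a| := by
  rcases lt_trichotomy a 0 with ha | rfl | ha
  · simp [sign_of_neg ha, abs_of_neg ha]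
  · simp
  · simp [sign_of_pos ha, abs_of_pos ha]

theorem abs_sign_le_one (a : ℝ) : |sign a| ≤ 1 := by
  rcases sign_apply_eq a with h | h | h <;> simp [h]

theorem sign_mul_sign_self (a : ℝ) : sign a * sign a = |sign a| := by
  rcases sign_apply_eq a with h | h | h <;> simp [h]

theorem abs_sub_sign_mul_le (w z : ℝ) : |w| - sign w * z ≤ |z - w| := by
  rw [← sign_mul_self_eq_abs, ← mul_sub, abs_sub_comm]
  calc sign w * (w - z) ≤ |sign w| * |w - z| := by rw [← abs_mul]; exact le_abs_self _
    _ ≤ |w - z| := mul_le_of_le_one_left (abs_nonneg _) (abs_sign_le_one w)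

theorem abs_sub_eq_of_abs_le {w z : ℝ} (h : |z| ≤ |w|) : |z - w| = |w| - sign w * z := by
  obtain ⟨h₁, h₂⟩ := abs_le.1 h
  rcases lt_trichotomy w 0 with hw | rfl | hw
  · rw [abs_of_neg hw] at h₁ h₂
    rw [sign_of_neg hw, abs_of_neg hw, abs_of_nonneg (by linarith)]; ring
  · simp only [abs_zero, abs_nonpos_iff] at h
    simp [h]
  · rw [abs_of_pos hw] at h₁ h₂
    rw [sign_of_pos hw, abs_of_pos hw, abs_of_nonpos (by linarith)]; ring

end Real

theorem abs_sub_add_abs_add_of_abs_le {w z : ℝ} (h : |z| ≤ |w|) :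
    |w - z| + |w + z| = 2 * |w| := by
  have h₁ := Real.abs_sub_eq_of_abs_le h
  have h₂ := Real.abs_sub_eq_of_abs_le (show |-z| ≤ |w| by rwa [abs_neg])
  rw [abs_sub_comm, h₁, show w + z = -(-z - w) by ring, abs_neg, h₂]
  ring

theorem exists_kink_forall_sum_abs_le {ι : Type*} [Fintype ι] {a b : ι → ℝ} (ha : a ≠ 0)
    {r₀ : ℝ} (hr₀ : ∀ r, ∑ k, |r₀ * a k - b k| ≤ ∑ k, |r * a k - b k|) :
    ∃ i, a i ≠ 0 ∧ ∀ r, ∑ k, |b i / a i * a k - b k| ≤ ∑ k, |r * a k - b k| := by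
  obtain ⟨i, hi, hnearest⟩ := Finset.exists_min_image (Finset.univ.filter (a · ≠ 0))
    (fun k => |b k / a k - r₀|) (by simpa [Finset.filter_nonempty_iff, funext_iff] using ha)
  have hai : a i ≠ 0 := (Finset.mem_filter.1 hi).2
  refine ⟨i, hai, fun r => ?_⟩
  set δ := b i / a i - r₀
  -- no kink lies strictly closer to `r₀` than `r₀ + δ`, so the objective is affine on
  -- `[r₀ - |δ|, r₀ + |δ|]` and its minimality at the midpoint `r₀` forces it to be constant there
  have hterm : ∀ k, |(r₀ + δ) * a k - b k| + |(r₀ - δ) * a k - b k| = 2 * |r₀ * a k - b k| := by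
    intro k
    have hk : |δ * a k| ≤ |r₀ * a k - b k| := by
      by_cases hak : a k = 0
      · simp [hak]
      have := hnearest k (by simp [hak])
      rw [abs_mul, show r₀ * a k - b k = -((b k / a k - r₀) * a k) by field_simp; ring, abs_neg,
        abs_mul]
      exact mul_le_mul_of_nonneg_right this (abs_nonneg _)
    rw [← abs_sub_add_abs_add_of_abs_le hk]
    ring_nf
  have hsum : ∑ k, |(r₀ + δ) * a k - b k| + ∑ k, |(r₀ - δ) * a k - b k|
      = 2 * ∑ k, |r₀ * a k - b k| := by
    rw [← Finset.sum_add_distrib, Finset.mul_sum]; exact Finset.sum_congr rfl fun k _ => hterm k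
  have hδ : r₀ + δ = b i / a i := by ring
  rw [← hδ]
  linarith [hr₀ (r₀ - δ), hr₀ r]

theorem not_isLocalMin_of_tendsto {X : Type*} [TopologicalSpace X] {f : X → ℝ} {z : X}
    {p : ℝ → X} (hp : Filter.Tendsto p (nhdsWithin 0 (Set.Ioi 0)) (nhds z))
    (hlt : ∀ᶠ t in nhdsWithin 0 (Set.Ioi 0), f (p t) < f z) : ¬ IsLocalMin f z := fun h =>
  let ⟨_, hle, hlt⟩ := ((hp.eventually h).and hlt).exists
  hle.not_gt hlt

theorem le_apply_of_forall_sum_le {ι : Type*} [Fintype ι] [DecidableEq ι] {g : ι → ℝ → ℝ}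
    {x : ι → ℝ} (h : ∀ x' : ι → ℝ, ∑ k, g k (x k) ≤ ∑ k, g k (x' k)) (i : ι) (s : ℝ) :
    g i (x i) ≤ g i s := by
  have hrest : ∑ k ∈ Finset.univ.erase i, g k (Function.update x i s k)
      = ∑ k ∈ Finset.univ.erase i, g k (x k) :=
    Finset.sum_congr rfl fun k hk => by rw [Function.update_of_ne (Finset.ne_of_mem_erase hk)]
  have := h (Function.update x i s)
  rw [← Finset.add_sum_erase _ _ (Finset.mem_univ i),
    ← Finset.add_sum_erase _ _ (Finset.mem_univ i), Function.update_self, hrest] at this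
  linarith

section RankOneL1Loss

variable {ι κ : Type*} [Fintype ι] [Fintype κ]

noncomputable def rankOneL1Loss (u : ι → ℝ) (v : κ → ℝ) (q : (ι → ℝ) × (κ → ℝ)) : ℝ :=
  ∑ i, ∑ j, |q.1 i * q.2 j - u i * v j|

noncomputable def signSum (u a : ι → ℝ) : ℝ := ∑ i, Real.sign (u i) * a i

noncomputable def offSupportL1 (u a : ι → ℝ) : ℝ :=
  ∑ i ∈ Finset.univ.filter (fun i => u i = 0), |a i|

variable {u : ι → ℝ} {v : κ → ℝ}

theorem rankOneL1Loss_nonneg (q : (ι → ℝ) × (κ → ℝ)) : 0 ≤ rankOneL1Loss u v q :=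
  Finset.sum_nonneg fun _ _ => Finset.sum_nonneg fun _ _ => abs_nonneg _

theorem rankOneL1Loss_self : rankOneL1Loss u v (u, v) = 0 := by
  simp [rankOneL1Loss]

theorem forall_rankOneL1Loss_le_iff {q : (ι → ℝ) × (κ → ℝ)} :
    (∀ p, rankOneL1Loss u v q ≤ rankOneL1Loss u v p) ↔ rankOneL1Loss u v q = 0 :=
  ⟨fun h => le_antisymm (rankOneL1Loss_self (u := u) (v := v) ▸ h (u, v)) (rankOneL1Loss_nonneg q),
    fun h p => h ▸ rankOneL1Loss_nonneg p⟩

theorem rankOneL1Loss_swap (a : ι → ℝ) (b : κ → ℝ) :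
    rankOneL1Loss v u (b, a) = rankOneL1Loss u v (a, b) := by
  simp only [rankOneL1Loss]
  rw [Finset.sum_comm]
  simp only [mul_comm]

theorem isLocalMin_rankOneL1Loss_swap {a : ι → ℝ} {b : κ → ℝ}
    (h : IsLocalMin (rankOneL1Loss u v) (a, b)) : IsLocalMin (rankOneL1Loss v u) (b, a) := by
  have := h.comp_continuous (g := Prod.swap) (b := (b, a)) continuous_swap.continuousAt
  convert this using 1
  ext ⟨b', a'⟩
  exact rankOneL1Loss_swap a' b'

theorem rankOneL1Loss_zero_right (a : ι → ℝ) :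
    rankOneL1Loss u v (a, 0) = (∑ i, |u i|) * ∑ j, |v j| := by
  simp [rankOneL1Loss, Finset.sum_mul_sum, abs_mul]

theorem sum_abs_pos (hu : u ≠ 0) : 0 < ∑ i, |u i| := by
  obtain ⟨i, hi⟩ := Function.ne_iff.1 hu
  exact Finset.sum_pos' (fun _ _ => abs_nonneg _) ⟨i, Finset.mem_univ _, abs_pos.2 hi⟩

theorem rankOneL1Loss_zero_right_ne_zero (hu : u ≠ 0) (hv : v ≠ 0) (a : ι → ℝ) :
    rankOneL1Loss u v (a, 0) ≠ 0 := by
  rw [rankOneL1Loss_zero_right]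
  exact (mul_pos (sum_abs_pos hu) (sum_abs_pos hv)).ne'

theorem signSum_eq_sum_filter (u a : ι → ℝ) :
    signSum u a = ∑ i ∈ Finset.univ.filter (fun i => u i ≠ 0), Real.sign (u i) * a i :=
  (Finset.sum_filter_of_ne fun i _ h => by rintro hu; simp [hu] at h).symm

theorem abs_mul_sub_mul_ge (a b u v : ℝ) :
    |u| * |v| + (if u = 0 then |a| * |b| else 0) - Real.sign u * a * (Real.sign v * b)
      ≤ |a * b - u * v| := by
  by_cases hu : u = 0
  · simp [hu, abs_mul]
  · rw [if_neg hu, ← abs_mul, add_zero, show Real.sign u * a * (Real.sign v * b)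
      = Real.sign (u * v) * (a * b) by rw [Real.sign_mul]; ring]
    exact Real.abs_sub_sign_mul_le _ _

theorem abs_mul_sub_mul_eq {a b u v : ℝ} (h : u ≠ 0 → |a * b| ≤ |u * v|) :
    |a * b - u * v| =
      |u| * |v| + (if u = 0 then |a| * |b| else 0) - Real.sign u * a * (Real.sign v * b) := by
  by_cases hu : u = 0
  · simp [hu, abs_mul]
  · rw [if_neg hu, ← abs_mul, add_zero, show Real.sign u * a * (Real.sign v * b)
      = Real.sign (u * v) * (a * b) by rw [Real.sign_mul]; ring]
    exact Real.abs_sub_eq_of_abs_le (h hu)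

theorem sum_sum_sign_terms_eq (a : ι → ℝ) (b : κ → ℝ) :
    ∑ i, ∑ j, (|u i| * |v j| + (if u i = 0 then |a i| * |b j| else 0)
      - Real.sign (u i) * a i * (Real.sign (v j) * b j))
      = (∑ i, |u i|) * (∑ j, |v j|) + offSupportL1 u a * ∑ j, |b j|
        - signSum u a * signSum v b := by
  simp only [Finset.sum_add_distrib, Finset.sum_sub_distrib, Finset.sum_mul_sum, offSupportL1,
    signSum, Finset.sum_filter, ite_mul, zero_mul]

theorem le_rankOneL1Loss (a : ι → ℝ) (b : κ → ℝ) :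
    (∑ i, |u i|) * (∑ j, |v j|) + offSupportL1 u a * (∑ j, |b j|) - signSum u a * signSum v b
      ≤ rankOneL1Loss u v (a, b) := by
  rw [← sum_sum_sign_terms_eq]
  exact Finset.sum_le_sum fun i _ => Finset.sum_le_sum fun j _ => abs_mul_sub_mul_ge _ _ _ _

theorem rankOneL1Loss_eq_of_abs_mul_le {a : ι → ℝ} {b : κ → ℝ}
    (h : ∀ i j, u i ≠ 0 → |a i * b j| ≤ |u i * v j|) :
    rankOneL1Loss u v (a, b) = (∑ i, |u i|) * (∑ j, |v j|) + offSupportL1 u a * (∑ j, |b j|)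
      - signSum u a * signSum v b := by
  rw [← sum_sum_sign_terms_eq]
  exact Finset.sum_congr rfl fun i _ => Finset.sum_congr rfl fun j _ => abs_mul_sub_mul_eq (h i j)

theorem continuous_signSum : Continuous (signSum u) := by
  unfold signSum; fun_prop

theorem continuous_offSupportL1 : Continuous (offSupportL1 u) := by
  unfold offSupportL1; fun_prop

theorem abs_signSum_le (a : ι → ℝ) : |signSum u a| ≤ ∑ i, |a i| :=
  (Finset.abs_sum_le_sum_abs _ _).trans <| Finset.sum_le_sum fun i _ => by
    rw [abs_mul]; exact mul_le_of_le_one_left (abs_nonneg _) (Real.abs_sign_le_one _)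

theorem sum_abs_sign_pos (hu : u ≠ 0) : 0 < ∑ i, |Real.sign (u i)| := by
  obtain ⟨i, hi⟩ := Function.ne_iff.1 hu
  exact Finset.sum_pos' (fun _ _ => abs_nonneg _)
    ⟨i, Finset.mem_univ _, abs_pos.2 (Real.sign_eq_zero_iff.not.2 hi)⟩

theorem isLocalMin_of_abs_signSum_lt {x : ι → ℝ} (h : |signSum u x| < offSupportL1 u x) :
    IsLocalMin (rankOneL1Loss u v) (x, 0) := by
  have hnhds : {q : (ι → ℝ) × (κ → ℝ) | |signSum u q.1| < offSupportL1 u q.1} ∈ nhds (x, 0) :=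
    (isOpen_lt (continuous_signSum.comp continuous_fst).abs
      (continuous_offSupportL1.comp continuous_fst)).mem_nhds h
  filter_upwards [hnhds] with ⟨a, b⟩ (hab : |signSum u a| < offSupportL1 u a)
  have hprod : signSum u a * signSum v b ≤ offSupportL1 u a * ∑ j, |b j| :=
    calc signSum u a * signSum v b ≤ |signSum u a| * |signSum v b| := by
          rw [← abs_mul]; exact le_abs_self _
      _ ≤ offSupportL1 u a * ∑ j, |b j| :=
          mul_le_mul hab.le (abs_signSum_le b) (abs_nonneg _) ((abs_nonneg _).trans hab.le)
  rw [rankOneL1Loss_zero_right]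
  linarith [le_rankOneL1Loss (u := u) (v := v) a b]

theorem rankOneL1Loss_signPath {x : ι → ℝ} {σ t : ℝ} (hσ : |σ| = 1) (ht : 0 ≤ t)
    (hsmall : ∀ i j, u i ≠ 0 →
      |(x i + t * σ * Real.sign (u i)) * (t * σ * Real.sign (v j))| ≤ |u i * v j|) :
    rankOneL1Loss u v (fun i => x i + t * σ * Real.sign (u i), fun j => t * σ * Real.sign (v j))
      = (∑ i, |u i|) * (∑ j, |v j|) + t * (∑ j, |Real.sign (v j)|) *
        (offSupportL1 u x - σ * signSum u x - t * ∑ i, |Real.sign (u i)|) := by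
  have hT : offSupportL1 u (fun i => x i + t * σ * Real.sign (u i)) = offSupportL1 u x :=
    Finset.sum_congr rfl fun i hi => by simp [(Finset.mem_filter.1 hi).2]
  have hSu : signSum u (fun i => x i + t * σ * Real.sign (u i))
      = signSum u x + t * σ * ∑ i, |Real.sign (u i)| := by
    simp only [signSum, Finset.mul_sum, ← Finset.sum_add_distrib, ← Real.sign_mul_sign_self]
    exact Finset.sum_congr rfl fun i _ => by ring
  have hSv : signSum v (fun j => t * σ * Real.sign (v j)) = t * σ * ∑ j, |Real.sign (v j)| := by
    simp only [signSum, Finset.mul_sum, ← Real.sign_mul_sign_self]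
    exact Finset.sum_congr rfl fun j _ => by ring
  have hb : ∑ j, |t * σ * Real.sign (v j)| = t * ∑ j, |Real.sign (v j)| := by
    simp [abs_mul, hσ, abs_of_nonneg ht, Finset.mul_sum]
  have hσσ : σ * σ = 1 := by rw [← abs_mul_abs_self, hσ, one_mul]
  rw [rankOneL1Loss_eq_of_abs_mul_le hsmall, hT, hSu, hSv, hb]
  linear_combination (-(t * t * (∑ i, |Real.sign (u i)|) * ∑ j, |Real.sign (v j)|)) * hσσ

theorem not_isLocalMin_of_le_abs_signSum (hu : u ≠ 0) (hv : v ≠ 0) {x : ι → ℝ}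
    (h : offSupportL1 u x ≤ |signSum u x|) : ¬ IsLocalMin (rankOneL1Loss u v) (x, 0) := by
  obtain ⟨σ, hσ, hσS⟩ : ∃ σ : ℝ, |σ| = 1 ∧ σ * signSum u x = |signSum u x| := by
    rcases le_total 0 (signSum u x) with hS | hS
    · exact ⟨1, by simp, by simp [abs_of_nonneg hS]⟩
    · exact ⟨-1, by simp, by simp [abs_of_nonpos hS]⟩
  set p : ℝ → (ι → ℝ) × (κ → ℝ) :=
    fun t => (fun i => x i + t * σ * Real.sign (u i), fun j => t * σ * Real.sign (v j))
  have hp : Filter.Tendsto p (nhdsWithin 0 (Set.Ioi 0)) (nhds (x, 0)) :=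
    ((by fun_prop : Continuous p).tendsto' 0 (x, 0) (by simp [p]; rfl)).mono_left nhdsWithin_le_nhds
  have hsmall : ∀ᶠ t in nhds (0 : ℝ), ∀ i j, u i ≠ 0 →
      |(x i + t * σ * Real.sign (u i)) * (t * σ * Real.sign (v j))| ≤ |u i * v j| := by
    simp only [Filter.eventually_all]
    intro i j hui
    by_cases hvj : v j = 0
    · exact Filter.Eventually.of_forall fun t => by simp [hvj]
    have hlim : Filter.Tendsto (fun t : ℝ => |(x i + t * σ * Real.sign (u i)) *
        (t * σ * Real.sign (v j))|) (nhds 0) (nhds 0) := by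
      simpa using ((by fun_prop : Continuous fun t : ℝ => |(x i + t * σ * Real.sign (u i)) *
        (t * σ * Real.sign (v j))|).tendsto 0)
    exact (hlim.eventually_lt_const (abs_pos.2 (mul_ne_zero hui hvj))).mono fun t ht => ht.le
  refine not_isLocalMin_of_tendsto hp ?_
  filter_upwards [self_mem_nhdsWithin, nhdsWithin_le_nhds hsmall] with t (ht : 0 < t) hsmall
  rw [rankOneL1Loss_signPath hσ ht.le hsmall, rankOneL1Loss_zero_right, hσS]
  have hdecr : t * (∑ j, |Real.sign (v j)|) *
      (offSupportL1 u x - |signSum u x| - t * ∑ i, |Real.sign (u i)|) < 0 :=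
    mul_neg_of_pos_of_neg (mul_pos ht (sum_abs_sign_pos hv))
      (by linarith [mul_pos ht (sum_abs_sign_pos hu)])
  linarith

theorem isLocalMin_rankOneL1Loss_zero_right_iff (hu : u ≠ 0) (hv : v ≠ 0) {x : ι → ℝ} :
    IsLocalMin (rankOneL1Loss u v) (x, 0) ↔ |signSum u x| < offSupportL1 u x :=
  ⟨fun h => not_le.1 fun hle => not_isLocalMin_of_le_abs_signSum hu hv hle h,
    isLocalMin_of_abs_signSum_lt⟩

theorem convexOn_rankOneL1Loss_fst (b : κ → ℝ) :
    ConvexOn ℝ Set.univ fun a : ι → ℝ => rankOneL1Loss u v (a, b) := by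
  refine ⟨convex_univ, fun a _ a' _ s t hs ht hst => ?_⟩
  simp only [rankOneL1Loss, smul_eq_mul, Finset.mul_sum, ← Finset.sum_add_distrib]
  refine Finset.sum_le_sum fun i _ => Finset.sum_le_sum fun j _ => ?_
  calc |(s • a + t • a') i * b j - u i * v j|
      = |s * (a i * b j - u i * v j) + t * (a' i * b j - u i * v j)| := by
        congr 1; simp only [Pi.add_apply, Pi.smul_apply, smul_eq_mul]
        linear_combination (u i * v j) * hst
    _ ≤ s * |a i * b j - u i * v j| + t * |a' i * b j - u i * v j| := by
        refine (abs_add_le _ _).trans_eq ?_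
        rw [abs_mul, abs_mul, abs_of_nonneg hs, abs_of_nonneg ht]

theorem sum_abs_sub_mul_eq_abs_mul {c : ℝ} (hc : c ≠ 0) (a : ℝ) (b w : κ → ℝ) :
    ∑ j, |a * b j - c * w j| = |c| * ∑ j, |a / c * b j - w j| := by
  rw [Finset.mul_sum]
  refine Finset.sum_congr rfl fun j _ => ?_
  rw [← abs_mul]
  congr 1
  field_simp

section IsLocalMin

variable {x : ι → ℝ} {y : κ → ℝ}

theorem IsLocalMin.rankOneL1Loss_row_le (h : IsLocalMin (rankOneL1Loss u v) (x, y)) (i : ι)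
    (s : ℝ) : ∑ j, |x i * y j - u i * v j| ≤ ∑ j, |s * y j - u i * v j| := by
  have hfst := IsMinOn.of_isLocalMin_of_convex_univ
    (h.comp_continuous (g := fun a => (a, y)) (by fun_prop)) (convexOn_rankOneL1Loss_fst y)
  exact le_apply_of_forall_sum_le (g := fun i s => ∑ j, |s * y j - u i * v j|) hfst i s

theorem IsLocalMin.rankOneL1Loss_apply_eq_zero (h : IsLocalMin (rankOneL1Loss u v) (x, y))
    (hy : y ≠ 0) {i : ι} (hui : u i = 0) : x i = 0 := by
  obtain ⟨j, hj⟩ := Function.ne_iff.1 hy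
  have hrow := h.rankOneL1Loss_row_le i 0
  simp only [hui, zero_mul, sub_zero, abs_zero, Finset.sum_const_zero, abs_mul] at hrow
  have := (Finset.sum_eq_zero_iff_of_nonneg fun j _ => by positivity).1
    (hrow.antisymm (by positivity)) j (Finset.mem_univ j)
  exact abs_eq_zero.1 ((mul_eq_zero.1 this).resolve_right (abs_ne_zero.2 hj))

theorem IsLocalMin.rankOneL1Loss_div_le (h : IsLocalMin (rankOneL1Loss u v) (x, y)) {i : ι}
    (hui : u i ≠ 0) (s : ℝ) : ∑ j, |x i / u i * y j - v j| ≤ ∑ j, |s * y j - v j| := by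
  have hrow := h.rankOneL1Loss_row_le i (u i * s)
  rw [sum_abs_sub_mul_eq_abs_mul hui, sum_abs_sub_mul_eq_abs_mul hui,
    mul_div_cancel_left₀ _ hui] at hrow
  exact le_of_mul_le_mul_left hrow (abs_pos.2 hui)

theorem IsLocalMin.exists_kink_rankOneL1Loss (h : IsLocalMin (rankOneL1Loss u v) (x, y))
    (hx : x ≠ 0) (hy : y ≠ 0) :
    ∃ i, x i ≠ 0 ∧ u i ≠ 0 ∧ ∀ r, ∑ k, |u i / x i * x k - u k| ≤ ∑ k, |r * x k - u k| := by
  have hswap := isLocalMin_rankOneL1Loss_swap h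
  obtain ⟨j, hj⟩ := Function.ne_iff.1 hy
  have hvj : v j ≠ 0 := fun hvj => hj (hswap.rankOneL1Loss_apply_eq_zero hx hvj)
  obtain ⟨i, hxi, hmin⟩ := exists_kink_forall_sum_abs_le hx (hswap.rankOneL1Loss_div_le hvj)
  exact ⟨i, hxi, fun hui => hxi (h.rankOneL1Loss_apply_eq_zero hy hui), hmin⟩

-- the residual factors as `(1 - t) (xᵢ yⱼ - uᵢ vⱼ - t dᵢ eⱼ)` with `d = x - c u`, `e = y - ν v`
theorem rankOneL1Loss_segment_le {c ν t : ℝ} (hcν : c * ν = 1) (ht₀ : 0 ≤ t) (ht₁ : t ≤ 1) :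
    rankOneL1Loss u v (fun i => x i - t * (x i - c * u i), fun j => y j - t * (y j - ν * v j))
      ≤ (1 - t) * (rankOneL1Loss u v (x, y)
        + t * ((∑ i, |x i - c * u i|) * ∑ j, |y j - ν * v j|)) := by
  have hterm : ∀ i j, |(x i - t * (x i - c * u i)) * (y j - t * (y j - ν * v j)) - u i * v j|
      ≤ (1 - t) * (|x i * y j - u i * v j| + t * (|x i - c * u i| * |y j - ν * v j|)) := by
    intro i j
    rw [show (x i - t * (x i - c * u i)) * (y j - t * (y j - ν * v j)) - u i * v j
        = (1 - t) * ((x i * y j - u i * v j) - t * ((x i - c * u i) * (y j - ν * v j))) by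
          linear_combination (t * u i * v j) * hcν,
      abs_mul, abs_of_nonneg (sub_nonneg.2 ht₁), ← abs_mul, ← abs_of_nonneg ht₀, ← abs_mul,
      abs_of_nonneg ht₀]
    exact mul_le_mul_of_nonneg_left (abs_sub _ _) (sub_nonneg.2 ht₁)
  refine (Finset.sum_le_sum fun i _ => Finset.sum_le_sum fun j _ => hterm i j).trans_eq ?_
  simp only [rankOneL1Loss, ← Finset.mul_sum, Finset.sum_add_distrib, Finset.sum_mul_sum]

theorem not_isLocalMin_rankOneL1Loss_of_mul_eq_one {c ν : ℝ} (hcν : c * ν = 1)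
    (hpos : 0 < rankOneL1Loss u v (x, y))
    (hle : (∑ i, |x i - c * u i|) * (∑ j, |y j - ν * v j|) ≤ rankOneL1Loss u v (x, y)) :
    ¬ IsLocalMin (rankOneL1Loss u v) (x, y) := by
  set p : ℝ → (ι → ℝ) × (κ → ℝ) :=
    fun t => (fun i => x i - t * (x i - c * u i), fun j => y j - t * (y j - ν * v j))
  refine not_isLocalMin_of_tendsto (p := p)
    (((by fun_prop : Continuous p).tendsto' 0 (x, y) (by simp [p])).mono_left nhdsWithin_le_nhds) ?_
  filter_upwards [Ioo_mem_nhdsGT one_pos] with t ⟨ht₀, ht₁⟩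
  calc rankOneL1Loss u v (p t)
      ≤ (1 - t) * (rankOneL1Loss u v (x, y)
        + t * ((∑ i, |x i - c * u i|) * ∑ j, |y j - ν * v j|)) :=
        rankOneL1Loss_segment_le hcν ht₀.le ht₁.le
    _ ≤ (1 - t) * (rankOneL1Loss u v (x, y) + t * rankOneL1Loss u v (x, y)) := by
        gcongr
    _ < rankOneL1Loss u v (x, y) := by nlinarith [mul_pos (mul_pos ht₀ ht₀) hpos]

theorem IsLocalMin.rankOneL1Loss_eq_zero (h : IsLocalMin (rankOneL1Loss u v) (x, y))
    (hx : x ≠ 0) (hy : y ≠ 0) : rankOneL1Loss u v (x, y) = 0 := by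
  obtain ⟨i, hxi, hui, hH⟩ := h.exists_kink_rankOneL1Loss hx hy
  set c := x i / u i
  set ν := u i / x i
  have hcν : c * ν = 1 := by
    rw [div_mul_div_comm, mul_comm (x i), div_self (mul_ne_zero hui hxi)]
  have hd : ∑ k, |x k - c * u k| ≤ |c| * ∑ k, |u k| :=
    calc ∑ k, |x k - c * u k| = |c| * ∑ k, |ν * x k - u k| := by
          rw [Finset.mul_sum]
          refine Finset.sum_congr rfl fun k _ => ?_
          rw [← abs_mul]
          congr 1
          linear_combination (-x k) * hcν
      _ ≤ |c| * ∑ k, |u k| := mul_le_mul_of_nonneg_left (by simpa using hH 0) (abs_nonneg c)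
  have he : ∑ j, |y j - ν * v j| = |ν| * ∑ j, |c * y j - v j| := by
    rw [Finset.mul_sum]
    refine Finset.sum_congr rfl fun j _ => ?_
    rw [← abs_mul]
    congr 1
    linear_combination (-y j) * hcν
  have hL : (∑ k, |u k|) * ∑ j, |c * y j - v j| ≤ rankOneL1Loss u v (x, y) := by
    rw [Finset.sum_mul]
    refine Finset.sum_le_sum fun k _ => ?_
    by_cases huk : u k = 0
    · simp only [huk, abs_zero, zero_mul]
      positivity
    · rw [sum_abs_sub_mul_eq_abs_mul huk]
      exact mul_le_mul_of_nonneg_left (h.rankOneL1Loss_div_le hui _) (abs_nonneg _)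
  by_contra hne
  refine not_isLocalMin_rankOneL1Loss_of_mul_eq_one hcν
    ((rankOneL1Loss_nonneg _).lt_of_ne' hne) ?_ h
  calc (∑ k, |x k - c * u k|) * ∑ j, |y j - ν * v j|
      ≤ |c| * (∑ k, |u k|) * (|ν| * ∑ j, |c * y j - v j|) := by
        rw [he]; gcongr
    _ = (∑ k, |u k|) * ∑ j, |c * y j - v j| := by
        rw [show |c| * (∑ k, |u k|) * (|ν| * ∑ j, |c * y j - v j|)
          = |c * ν| * ((∑ k, |u k|) * ∑ j, |c * y j - v j|) by rw [abs_mul]; ring, hcν, abs_one,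
          one_mul]
    _ ≤ rankOneL1Loss u v (x, y) := hL

end IsLocalMin

end RankOneL1Loss

theorem spurious_local_minima_characterization_general (m n : ℕ)
    (u : Fin m → ℝ) (v : Fin n → ℝ) (hu : u ≠ 0) (hv : v ≠ 0)
    (x : Fin m → ℝ) (y : Fin n → ℝ) :
    (IsLocalMin (fun q : (Fin m → ℝ) × (Fin n → ℝ) =>
          ∑ i, ∑ j, |q.1 i * q.2 j - u i * v j|) (x, y) ∧
      ¬ (∀ p : (Fin m → ℝ) × (Fin n → ℝ),
          (∑ i, ∑ j, |x i * y j - u i * v j|) ≤ ∑ i, ∑ j, |p.1 i * p.2 j - u i * v j|))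
    ↔
    ((|∑ i ∈ Finset.univ.filter (fun i => u i ≠ 0), Real.sign (u i) * x i|
          < (∑ i ∈ Finset.univ.filter (fun i => u i = 0), |x i|) ∧ y = 0) ∨
      (x = 0 ∧
        |∑ j ∈ Finset.univ.filter (fun j => v j ≠ 0), Real.sign (v j) * y j|
          < ∑ j ∈ Finset.univ.filter (fun j => v j = 0), |y j|)) := by
  rw [← signSum_eq_sum_filter, ← signSum_eq_sum_filter]
  change (IsLocalMin (rankOneL1Loss u v) (x, y) ∧
      ¬ ∀ p, rankOneL1Loss u v (x, y) ≤ rankOneL1Loss u v p) ↔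
    (|signSum u x| < offSupportL1 u x ∧ y = 0) ∨ (x = 0 ∧ |signSum v y| < offSupportL1 v y)
  rw [forall_rankOneL1Loss_le_iff]
  constructor
  · rintro ⟨hmin, hne⟩
    by_cases hy : y = 0
    · subst hy
      exact .inl ⟨(isLocalMin_rankOneL1Loss_zero_right_iff hu hv).1 hmin, rfl⟩
    by_cases hx : x = 0
    · subst hx
      exact .inr ⟨rfl, (isLocalMin_rankOneL1Loss_zero_right_iff hv hu).1
        (isLocalMin_rankOneL1Loss_swap hmin)⟩
    exact absurd (hmin.rankOneL1Loss_eq_zero hx hy) hne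
  · rintro (⟨h, rfl⟩ | ⟨rfl, h⟩)
    · exact ⟨(isLocalMin_rankOneL1Loss_zero_right_iff hu hv).2 h,
        rankOneL1Loss_zero_right_ne_zero hu hv x⟩
    · exact ⟨isLocalMin_rankOneL1Loss_swap ((isLocalMin_rankOneL1Loss_zero_right_iff hv hu).2 h),
        rankOneL1Loss_swap (u := u) (v := v) 0 y ▸ rankOneL1Loss_zero_right_ne_zero hv hu y⟩

/-- If `u ≠ 0` and `v ≠ 0`, then `(x,y)` is a spurious local minimum of
`f(x,y) = Σᵢ Σⱼ |xᵢ yⱼ − uᵢ vⱼ|` (a local minimum that is not a global minimum) iff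
either `|Σ_{uᵢ≠0} sgn(uᵢ) xᵢ| < Σ_{uᵢ=0} |xᵢ|` and `y = 0`, or `x = 0` and
`|Σ_{vⱼ≠0} sgn(vⱼ) yⱼ| < Σ_{vⱼ=0} |yⱼ|`. -/
theorem spurious_local_minima_characterization (m n : ℕ) (hm : 1 ≤ m) (hn : 1 ≤ n)
    (u : Fin m → ℝ) (v : Fin n → ℝ) (hu : u ≠ 0) (hv : v ≠ 0)
    (x : Fin m → ℝ) (y : Fin n → ℝ) :
    (IsLocalMin (fun q : (Fin m → ℝ) × (Fin n → ℝ) =>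
          ∑ i, ∑ j, |q.1 i * q.2 j - u i * v j|) (x, y) ∧
      ¬ (∀ p : (Fin m → ℝ) × (Fin n → ℝ),
          (∑ i, ∑ j, |x i * y j - u i * v j|) ≤ ∑ i, ∑ j, |p.1 i * p.2 j - u i * v j|))
    ↔
    ((|∑ i ∈ Finset.univ.filter (fun i => u i ≠ 0), Real.sign (u i) * x i|
          < (∑ i ∈ Finset.univ.filter (fun i => u i = 0), |x i|) ∧ y = 0) ∨
      (x = 0 ∧
        |∑ j ∈ Finset.univ.filter (fun j => v j ≠ 0), Real.sign (v j) * y j|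
          < ∑ j ∈ Finset.univ.filter (fun j => v j = 0), |y j|)) :=
  spurious_local_minima_characterization_general m n u v hu hv x y
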